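/- arXiv:alg-geom/9308005 — 2 statements merged into one kernel-verified Lean document; each statement's English description precedes it below -/
import Mathlib

section
/- Let f be a nonzero real polynomial in n variables. Then there exists a real number K > 1 such that f is bounded away from zero on the region D_n(K) = {(t_1,...,t_n) : t_1 ≥ K, t_2 ≥ K·e^{t_1}, ..., t_n ≥ K·e^{t_{n-1}}}; that is, there exists C > 0 such that |f(t)| ≥ C for all t in D_n(K). -/
/-- The region `D_n(K)`: `t 0 ≥ K` and `t j ≥ K · exp (t (j-1))` for `j ≥ 1`. -/
def DRegion (n : ℕ) (K : ℝ) : Set (Fin n → ℝ) :=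
  {t | (∀ i : Fin n, (i : ℕ) = 0 → K ≤ t i) ∧
       (∀ i j : Fin n, (j : ℕ) = (i : ℕ) + 1 → K * Real.exp (t i) ≤ t j)}

open MvPolynomial Finset in
/-- Monotonicity of the region in `K`. -/
lemma DRegion_anti {n : ℕ} {K K' : ℝ} (h : K' ≤ K) :
    DRegion n K ⊆ DRegion n K' := by
  intro t ⟨h1, h2⟩
  refine ⟨fun i hi => h.trans (h1 i hi), fun i j hj => ?_⟩
  exact le_trans (mul_le_mul_of_nonneg_right h (Real.exp_nonneg _)) (h2 i j hj)

/-- Points in the region are monotone in the index. -/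
lemma DRegion_mono {n : ℕ} {K : ℝ} (hK : 1 ≤ K) {t : Fin n → ℝ}
    (ht : t ∈ DRegion n K) : Monotone t := by
  have key : ∀ d : ℕ, ∀ i j : Fin n, (j : ℕ) = (i : ℕ) + d → t i ≤ t j := by
    intro d
    induction d with
    | zero => intro i j hj; have : i = j := Fin.ext (by omega); rw [this]
    | succ d ih =>
      intro i j hj
      have hlt : (i : ℕ) + d < n := by omega
      set j' : Fin n := ⟨(i : ℕ) + d, hlt⟩
      have h1 : t i ≤ t j' := ih i j' rfl
      have h2 : K * Real.exp (t j') ≤ t j := ht.2 j' j (by simp [j']; omega)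
      have h3 : t j' ≤ Real.exp (t j') := by
        linarith [Real.add_one_le_exp (t j')]
      have h4 : Real.exp (t j') ≤ K * Real.exp (t j') := by
        nlinarith [Real.exp_pos (t j')]
      linarith
  intro i j hij
  exact key ((j : ℕ) - (i : ℕ)) i j (by omega)

/-- Points in the region are at least `K`. -/
lemma DRegion_le {n : ℕ} {K : ℝ} (hK : 1 ≤ K) {t : Fin n → ℝ}
    (ht : t ∈ DRegion n K) (i : Fin n) : K ≤ t i := by
  have h0 : K ≤ t ⟨0, i.pos⟩ := ht.1 _ rfl
  exact h0.trans (DRegion_mono hK ht (by simp [Fin.le_def]))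

open MvPolynomial in
/-- The algebra equivalence peeling off the *last* variable. -/
noncomputable def lastEquiv (n : ℕ) :
    MvPolynomial (Fin (n + 1)) ℝ ≃ₐ[ℝ] Polynomial (MvPolynomial (Fin n) ℝ) :=
  (renameEquiv ℝ (finSuccEquiv' (Fin.last n))).trans (optionEquivLeft ℝ (Fin n))

open MvPolynomial in
lemma eval_lastEquiv (n : ℕ) (t : Fin (n + 1) → ℝ) (f : MvPolynomial (Fin (n + 1)) ℝ) :
    MvPolynomial.eval t f =
      Polynomial.eval (t (Fin.last n))
        (Polynomial.map (MvPolynomial.eval (t ∘ Fin.castSucc)) (lastEquiv n f)) := by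
  have h : (MvPolynomial.eval t) =
      (Polynomial.evalRingHom (t (Fin.last n))).comp
        ((Polynomial.mapRingHom (MvPolynomial.eval (t ∘ Fin.castSucc))).comp
          (lastEquiv n).toAlgHom.toRingHom) := by
    apply MvPolynomial.ringHom_ext
    · intro r
      simp [lastEquiv, optionEquivLeft_C]
    · intro i
      induction i using Fin.lastCases with
      | last =>
        have : (finSuccEquiv' (Fin.last n)) (Fin.last n) = none := finSuccEquiv'_at _
        simp [lastEquiv, this, optionEquivLeft_X_none]
      | cast j =>
        have : (finSuccEquiv' (Fin.last n)) (Fin.castSucc j) = some j :=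
          finSuccEquiv'_below (Fin.castSucc_lt_last j)
        simp [lastEquiv, this, optionEquivLeft_X_some]
  rw [h]; rfl

open MvPolynomial Finset in
/-- Crude polynomial upper bound on evaluations. -/
lemma abs_eval_le (n : ℕ) (f : MvPolynomial (Fin n) ℝ) {y : ℝ} (hy : 1 ≤ y)
    {s : Fin n → ℝ} (h1 : ∀ i, 1 ≤ s i) (h2 : ∀ i, s i ≤ y) :
    |MvPolynomial.eval s f| ≤ (∑ d ∈ f.support, |coeff d f|) * y ^ f.totalDegree := by
  rw [MvPolynomial.eval_eq, Finset.sum_mul]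
  refine (Finset.abs_sum_le_sum_abs _ _).trans (Finset.sum_le_sum fun d hd => ?_)
  rw [abs_mul]
  refine mul_le_mul_of_nonneg_left ?_ (abs_nonneg _)
  have hpos : ∀ i ∈ d.support, (0:ℝ) ≤ s i ^ d i := fun i _ =>
    pow_nonneg (le_trans zero_le_one (h1 i)) _
  rw [abs_of_nonneg (Finset.prod_nonneg hpos)]
  calc ∏ i ∈ d.support, s i ^ d i
      ≤ ∏ i ∈ d.support, y ^ d i := by
        refine Finset.prod_le_prod hpos fun i _ =>
          pow_le_pow_left₀ (le_trans zero_le_one (h1 i)) (h2 i) _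
    _ = y ^ ∑ i ∈ d.support, d i := Finset.prod_pow_eq_pow_sum _ _ _
    _ ≤ y ^ f.totalDegree := pow_le_pow_right₀ hy (MvPolynomial.le_totalDegree hd)

open MvPolynomial Finset in
lemma main_aux : ∀ n : ℕ, ∀ f : MvPolynomial (Fin n) ℝ, f ≠ 0 →
    ∃ K : ℝ, 1 < K ∧ ∃ C : ℝ, 0 < C ∧
      ∀ t : Fin n → ℝ, t ∈ DRegion n K → C ≤ |MvPolynomial.eval t f| := by
  intro n
  induction n with
  | zero =>
    intro f hf
    obtain ⟨c, rfl⟩ := MvPolynomial.C_surjective (Fin 0) f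
    refine ⟨2, one_lt_two, |c|, ?_, fun t _ => by simp⟩
    simpa using hf
  | succ n ih =>
    intro f hf
    set q : Polynomial (MvPolynomial (Fin n) ℝ) := lastEquiv n f with hq_def
    have hq : q ≠ 0 := by
      simp only [hq_def, ne_eq, EmbeddingLike.map_eq_zero_iff]
      exact hf
    set m := q.natDegree with hm
    have hg : q.leadingCoeff ≠ 0 := Polynomial.leadingCoeff_ne_zero.mpr hq
    obtain ⟨K₀, hK₀, C, hC, hbound⟩ := ih q.leadingCoeff hg
    set B : ℝ := ∑ k ∈ Finset.range m,
      (∑ d ∈ (q.coeff k).support, |coeff d (q.coeff k)|) *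
        (Nat.factorial (q.coeff k).totalDegree : ℝ) * Real.exp 1 with hB_def
    have hB0 : 0 ≤ B := Finset.sum_nonneg fun k _ => by positivity
    set K : ℝ := max (max K₀ 2) (2 * (B + 1) * (m+1) / C) with hK_def
    have hK2 : (2:ℝ) ≤ K := le_max_of_le_left (le_max_right _ _)
    have hK1 : (1:ℝ) < K := lt_of_lt_of_le one_lt_two hK2
    have hKK₀ : K₀ ≤ K := le_max_of_le_left (le_max_left _ _)
    have hKB : 2 * (B + 1) * (m+1) / C ≤ K := le_max_right _ _
    refine ⟨K, hK1, C / 2, by positivity, ?_⟩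
    intro t ht
    set x : ℝ := t (Fin.last n) with hx_def
    have hx : K ≤ x := DRegion_le hK1.le ht (Fin.last n)
    have hx1 : (1:ℝ) ≤ x := le_trans hK1.le hx
    set s : Fin n → ℝ := t ∘ Fin.castSucc with hs_def
    have hs : s ∈ DRegion n K := by
      constructor
      · intro i hi
        exact ht.1 (Fin.castSucc i) (by simpa using hi)
      · intro i j hj
        exact ht.2 (Fin.castSucc i) (Fin.castSucc j) (by simpa using hj)
    have hs1 : ∀ i, 1 ≤ s i := fun i => le_trans hK1.le (DRegion_le hK1.le hs i)
    -- find a bound `y` for the first `n` coordinates with `exp y ≤ e * x / K`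
    obtain ⟨y, hy1, hy2, hy3⟩ : ∃ y : ℝ, 1 ≤ y ∧ (∀ i : Fin n, s i ≤ y) ∧
        Real.exp y ≤ Real.exp 1 * x / K := by
      cases n with
      | zero =>
        refine ⟨1, le_refl _, fun i => i.elim0, ?_⟩
        rw [le_div_iff₀ (by linarith)]
        have : Real.exp 1 * K ≤ Real.exp 1 * x :=
          mul_le_mul_of_nonneg_left hx (Real.exp_nonneg _)
        calc Real.exp 1 * K ≤ Real.exp 1 * x := this
          _ = _ := by ring
      | succ n' =>
        refine ⟨t (Fin.castSucc (Fin.last n')), le_trans hK1.le (DRegion_le hK1.le hs _), ?_, ?_⟩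
        · intro i
          exact DRegion_mono hK1.le hs (Fin.le_last i)
        · have hstep : K * Real.exp (t (Fin.castSucc (Fin.last n'))) ≤ x :=
            ht.2 (Fin.castSucc (Fin.last n')) (Fin.last (n' + 1)) (by simp)
          rw [le_div_iff₀ (by linarith)]
          have he1 : (1:ℝ) ≤ Real.exp 1 := by
            linarith [Real.add_one_le_exp (1:ℝ)]
          have hexp : (0:ℝ) ≤ Real.exp (t (Fin.castSucc (Fin.last n'))) :=
            Real.exp_nonneg _
          nlinarith [Real.exp_pos (t (Fin.castSucc (Fin.last n')))]
    -- the evaluation as a polynomial in the last variable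
    set P : Polynomial ℝ := Polynomial.map (MvPolynomial.eval s) q with hP_def
    have hPdeg : P.natDegree < m + 1 :=
      Nat.lt_succ_of_le Polynomial.natDegree_map_le
    have heval : MvPolynomial.eval t f = Polynomial.eval x P := eval_lastEquiv n t f
    have hcoeff : ∀ k, P.coeff k = MvPolynomial.eval s (q.coeff k) :=
      fun k => Polynomial.coeff_map _ _
    -- bound the lower-order coefficients
    have hxK : (0:ℝ) < K := by linarith
    have hlow : ∀ k ∈ Finset.range m, |P.coeff k * x ^ k| ≤
        ((∑ d ∈ (q.coeff k).support, |coeff d (q.coeff k)|) *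
          (Nat.factorial (q.coeff k).totalDegree : ℝ) * Real.exp 1 / K) * x ^ m := by
      intro k hk
      rw [Finset.mem_range] at hk
      rw [abs_mul, abs_pow, abs_of_nonneg (by linarith : (0:ℝ) ≤ x)]
      rw [hcoeff]
      set M := ∑ d ∈ (q.coeff k).support, |coeff d (q.coeff k)| with hM_def
      set D := (q.coeff k).totalDegree with hD_def
      have hM0 : 0 ≤ M := Finset.sum_nonneg fun d _ => abs_nonneg _
      have h1 : |MvPolynomial.eval s (q.coeff k)| ≤ M * y ^ D :=
        abs_eval_le n (q.coeff k) hy1 hs1 hy2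
      have h2 : y ^ D ≤ (Nat.factorial D : ℝ) * Real.exp y := by
        have := Real.pow_div_factorial_le_exp y (by linarith : (0:ℝ) ≤ y) D
        have hD0 : (0:ℝ) < (Nat.factorial D : ℝ) := by positivity
        rw [div_le_iff₀ hD0] at this
        linarith [this]
      have h3 : Real.exp y ≤ Real.exp 1 * x / K := hy3
      have hxk : x ^ k * x ≤ x ^ m := by
        calc x ^ k * x = x ^ (k + 1) := (pow_succ x k).symm
          _ ≤ x ^ m := pow_le_pow_right₀ hx1 hk
      calc |MvPolynomial.eval s (q.coeff k)| * x ^ k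
          ≤ M * ((Nat.factorial D : ℝ) * Real.exp y) * x ^ k := by
            have : M * y ^ D ≤ M * ((Nat.factorial D : ℝ) * Real.exp y) :=
              mul_le_mul_of_nonneg_left h2 hM0
            exact mul_le_mul_of_nonneg_right (h1.trans this)
              (pow_nonneg (by linarith) _)
        _ ≤ M * ((Nat.factorial D : ℝ) * (Real.exp 1 * x / K)) * x ^ k := by
            refine mul_le_mul_of_nonneg_right
              (mul_le_mul_of_nonneg_left
                (mul_le_mul_of_nonneg_left h3 (by positivity)) hM0)
              (pow_nonneg (by linarith) _)
        _ = (M * (Nat.factorial D : ℝ) * Real.exp 1 / K) * (x ^ k * x) := by ring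
        _ ≤ (M * (Nat.factorial D : ℝ) * Real.exp 1 / K) * x ^ m := by
            refine mul_le_mul_of_nonneg_left hxk ?_
            positivity
    -- assemble
    have hsum : |∑ k ∈ Finset.range m, P.coeff k * x ^ k| ≤ (C / 2) * x ^ m := by
      refine (Finset.abs_sum_le_sum_abs _ _).trans ?_
      refine le_trans (Finset.sum_le_sum hlow) ?_
      rw [← Finset.sum_mul, ← Finset.sum_div]
      rw [← hB_def]
      have hxm : (0:ℝ) ≤ x ^ m := pow_nonneg (by linarith) _
      refine mul_le_mul_of_nonneg_right ?_ hxm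
      rw [div_le_iff₀ hxK]
      have : 2 * (B + 1) * (m+1) / C * C ≤ K * C := by
        exact mul_le_mul_of_nonneg_right hKB hC.le
      rw [div_mul_cancel₀] at this
      · nlinarith [hB0, hC, Nat.cast_nonneg (α := ℝ) m]
      · exact hC.ne'
    have hlead : C ≤ |P.coeff m| := by
      rw [hcoeff]
      have : q.coeff m = q.leadingCoeff := rfl
      rw [this]
      exact hbound s (DRegion_anti hKK₀ hs)
    have hxm1 : (1:ℝ) ≤ x ^ m := one_le_pow₀ hx1
    have hCx : C * x ^ m ≤ |P.coeff m * x ^ m| := by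
      rw [abs_mul, abs_pow, abs_of_nonneg (by linarith : (0:ℝ) ≤ x)]
      exact mul_le_mul_of_nonneg_right hlead (pow_nonneg (by linarith) _)
    rw [heval, Polynomial.eval_eq_sum_range' hPdeg, Finset.sum_range_succ]
    have habs : |P.coeff m * x ^ m| - |∑ k ∈ Finset.range m, P.coeff k * x ^ k| ≤
        |∑ k ∈ Finset.range m, P.coeff k * x ^ k + P.coeff m * x ^ m| := by
      have := abs_add_le (∑ k ∈ Finset.range m, P.coeff k * x ^ k) (P.coeff m * x ^ m)
      have h2 := abs_sub_abs_le_abs_sub (P.coeff m * x ^ m)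
        (-(∑ k ∈ Finset.range m, P.coeff k * x ^ k))
      simp only [abs_neg, sub_neg_eq_add] at h2
      calc |P.coeff m * x ^ m| - |∑ k ∈ Finset.range m, P.coeff k * x ^ k|
          ≤ |P.coeff m * x ^ m + ∑ k ∈ Finset.range m, P.coeff k * x ^ k| := h2
        _ = _ := by rw [add_comm]
    have : C / 2 * x ^ m ≤ |∑ k ∈ Finset.range m, P.coeff k * x ^ k + P.coeff m * x ^ m| := by
      calc C / 2 * x ^ m = C * x ^ m - (C/2) * x ^ m := by ring
        _ ≤ |P.coeff m * x ^ m| - |∑ k ∈ Finset.range m, P.coeff k * x ^ k| := by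
            linarith [hsum, hCx]
        _ ≤ _ := habs
    calc C / 2 ≤ C / 2 * x ^ m := by nlinarith
      _ ≤ _ := this

/-- A nonzero real polynomial in `n` variables is bounded away from zero on `D_n(K)`
for some `K > 1`. -/
theorem nonzero_poly_bounded_away_on_region (n : ℕ)
    (f : MvPolynomial (Fin n) ℝ) (hf : f ≠ 0) :
    ∃ K : ℝ, 1 < K ∧ ∃ C : ℝ, 0 < C ∧
      ∀ t : Fin n → ℝ, t ∈ DRegion n K → C ≤ |MvPolynomial.eval t f| := by
  exact main_aux n f hf
end

section
/- In ℂ^n with n ≥ 1, suppose an arrangement of hyperplanes H is of fiber type, meaning there is a linear surjection φ : ℂ^n → ℂ^{n-1} and a fiber-type arrangement A in ℂ^{n-1} such that φ^{-1}(A) ⊆ H, each hyperplane of H not in φ^{-1}(A) surjects onto ℂ^{n-1} under φ, and the number of points of φ^{-1}(u) ∩ (⋃H) is constant for u ∈ ℂ^{n-1} − ⋃A (base case: a finite set of points in ℂ is fiber type). Then the induced map ℂ^n − ⋃H → ℂ^{n-1} − ⋃A is a fiber bundle whose fiber is ℂ minus a fixed finite number of points. -/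
/-- `h` is an affine hyperplane in `ℂ^m`: the level set of a nonzero linear
functional. -/
def IsAffineHyperplane (m : ℕ) (h : Set (Fin m → ℂ)) : Prop :=
  ∃ (L : (Fin m → ℂ) →ₗ[ℂ] ℂ) (c : ℂ), L ≠ 0 ∧ h = {x | L x = c}

open Filter

set_option maxHeartbeats 1600000

noncomputable def bumpC (r : ℝ) (z : ℂ) : ℝ := max 0 (min 1 (2 - ‖z‖ / r))

lemma bumpC_nonneg (r : ℝ) (z : ℂ) : 0 ≤ bumpC r z := le_max_left _ _

lemma bumpC_le_one (r : ℝ) (z : ℂ) : bumpC r z ≤ 1 :=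
  max_le zero_le_one (min_le_left _ _)

lemma bumpC_eq_one {r : ℝ} (hr : 0 < r) {z : ℂ} (h : ‖z‖ ≤ r) : bumpC r z = 1 := by
  have h1 : (1:ℝ) ≤ 2 - ‖z‖ / r := by
    have : ‖z‖ / r ≤ 1 := by rw [div_le_one hr]; exact h
    linarith
  rw [bumpC, min_eq_left h1, max_eq_right zero_le_one]

lemma bumpC_eq_zero {r : ℝ} (hr : 0 < r) {z : ℂ} (h : 2 * r ≤ ‖z‖) : bumpC r z = 0 := by
  have h1 : 2 - ‖z‖ / r ≤ 0 := by
    have : (2:ℝ) ≤ ‖z‖ / r := by rw [le_div_iff₀ hr]; linarith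
    linarith
  have : min 1 (2 - ‖z‖ / r) ≤ 0 := le_trans (min_le_right _ _) h1
  rw [bumpC, max_eq_left this]

lemma bumpC_lip {r : ℝ} (hr : 0 < r) (a b : ℂ) :
    |bumpC r a - bumpC r b| ≤ ‖a - b‖ / r := by
  have h1 : |bumpC r a - bumpC r b| ≤ |min 1 (2 - ‖a‖ / r) - min 1 (2 - ‖b‖ / r)| := by
    rw [bumpC, bumpC, max_comm 0 _, max_comm 0 _]
    exact abs_max_sub_max_le_abs _ _ _
  have h2 : |min 1 (2 - ‖a‖ / r) - min 1 (2 - ‖b‖ / r)| ≤ |(2 - ‖a‖ / r) - (2 - ‖b‖ / r)| := by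
    have := abs_min_sub_min_le_max (1:ℝ) (2 - ‖a‖ / r) 1 (2 - ‖b‖ / r)
    simpa using this
  have h3 : |(2 - ‖a‖ / r) - (2 - ‖b‖ / r)| = |‖a‖ - ‖b‖| / r := by
    rw [show (2 - ‖a‖ / r) - (2 - ‖b‖ / r) = (‖b‖ - ‖a‖) / r by ring,
      abs_div, abs_of_pos hr, abs_sub_comm]
  have h4 : |‖a‖ - ‖b‖| / r ≤ ‖a - b‖ / r :=
    div_le_div_of_nonneg_right (abs_norm_sub_norm_le a b) hr.le
  linarith

lemma bumpC_continuous (r : ℝ) : Continuous (bumpC r) :=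
  continuous_const.max (continuous_const.min (continuous_const.sub (continuous_norm.div_const r)))

/-- Inverse of a uniformly small Lipschitz perturbation of the identity on `ℂ`,
depending continuously on a parameter. -/
lemma exists_inverse_perturbation {X : Type*} [TopologicalSpace X]
    (g : X → ℂ → ℂ) (D : X → X → ℝ)
    (hlip : ∀ x a b, dist (g x a) (g x b) ≤ 2⁻¹ * dist a b)
    (hD : ∀ x x' a, dist (g x a) (g x' a) ≤ D x x')
    (hDc : ∀ x₁ : X, Tendsto (fun x => D x x₁) (nhds x₁) (nhds 0)) :
    ∃ G : X → ℂ → ℂ, (∀ x t, G x (t + g x t) = t) ∧ (∀ x z, G x z + g x (G x z) = z) ∧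
      Continuous fun p : X × ℂ => G p.1 p.2 := by
  have hK : ((2⁻¹ : NNReal) : ℝ) = 2⁻¹ := by norm_num
  -- injectivity of t ↦ t + g x t
  have hinj : ∀ x a b, a + g x a = b + g x b → a = b := by
    intro x a b hab
    by_contra hne
    have hd : dist a b = dist (g x b) (g x a) := by
      rw [dist_eq_norm, dist_eq_norm]
      congr 1
      linear_combination hab
    rw [dist_comm (g x b)] at hd
    have hl := hlip x a b
    rw [← hd] at hl
    have hpos : 0 < dist a b := dist_pos.2 hne
    linarith
  -- surjectivity via contraction fixed point
  have hsur : ∀ x z, ∃ t, t + g x t = z := by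
    intro x z
    have hc : ContractingWith 2⁻¹ (fun t => z - g x t) := by
      constructor
      · rw [← NNReal.coe_lt_coe]; push_cast; norm_num
      · apply LipschitzWith.of_dist_le_mul
        intro a b
        rw [dist_sub_left]
        calc dist (g x a) (g x b) ≤ 2⁻¹ * dist a b := hlip x a b
          _ = ((2⁻¹ : NNReal) : ℝ) * dist a b := by norm_num
    refine ⟨hc.fixedPoint (fun t => z - g x t), ?_⟩
    have hfix : z - g x (hc.fixedPoint (fun t => z - g x t)) =
        hc.fixedPoint (fun t => z - g x t) := hc.fixedPoint_isFixedPt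
    linear_combination -hfix
  classical
  set G : X → ℂ → ℂ := fun x z => Classical.choose (hsur x z) with hG
  have hright : ∀ x z, G x z + g x (G x z) = z := fun x z => Classical.choose_spec (hsur x z)
  have hleft : ∀ x t, G x (t + g x t) = t := by
    intro x t
    exact hinj x _ _ ((hright x (t + g x t)).trans rfl)
  refine ⟨G, hleft, hright, ?_⟩
  -- key estimate
  have hkey : ∀ (x x₁ : X) (z z₁ : ℂ),
      dist (G x z) (G x₁ z₁) ≤ 2 * D x x₁ + 2 * dist z z₁ := by
    intro x x₁ z z₁
    set a := G x z
    set b := G x₁ z₁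
    have h1 : dist a b ≤ dist (a + g x₁ a) z₁ + 2⁻¹ * dist a b := by
      have hb : b + g x₁ b = z₁ := hright x₁ z₁
      have : dist a b ≤ dist (a + g x₁ a) (b + g x₁ b) + dist (g x₁ a) (g x₁ b) := by
        rw [dist_eq_norm, dist_eq_norm, dist_eq_norm]
        have e : a - b = ((a + g x₁ a) - (b + g x₁ b)) - (g x₁ a - g x₁ b) := by ring
        rw [e]
        exact norm_sub_le _ _
      rw [hb] at this
      exact le_trans this (by linarith [hlip x₁ a b])
    have h2 : dist a b ≤ 2 * dist (a + g x₁ a) z₁ := by linarith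
    have h3 : dist (a + g x₁ a) z₁ ≤ dist (g x₁ a) (g x a) + dist z z₁ := by
      have ha : a + g x a = z := hright x z
      calc dist (a + g x₁ a) z₁ ≤ dist (a + g x₁ a) (a + g x a) + dist (a + g x a) z₁ :=
            dist_triangle _ _ _
        _ = dist (g x₁ a) (g x a) + dist z z₁ := by rw [dist_add_left, ha]
    have h4 : dist (g x₁ a) (g x a) ≤ D x x₁ := by rw [dist_comm]; exact hD x x₁ a
    linarith
  rw [continuous_iff_continuousAt]
  rintro ⟨x₁, z₁⟩
  rw [ContinuousAt, tendsto_iff_dist_tendsto_zero]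
  have hb : Tendsto (fun p : X × ℂ => 2 * D p.1 x₁ + 2 * dist p.2 z₁)
      (nhds (x₁, z₁)) (nhds 0) := by
    have t1 : Tendsto (fun p : X × ℂ => 2 * D p.1 x₁) (nhds (x₁, z₁)) (nhds 0) := by
      have := (hDc x₁).comp (continuous_fst.tendsto (x₁, z₁))
      simpa using (this.const_mul 2)
    have t2 : Tendsto (fun p : X × ℂ => 2 * dist p.2 z₁) (nhds (x₁, z₁)) (nhds 0) := by
      have : Tendsto (fun p : X × ℂ => dist p.2 z₁) (nhds (x₁, z₁)) (nhds (dist z₁ z₁)) :=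
        (continuous_snd.dist continuous_const).tendsto (x₁, z₁)
      rw [dist_self] at this
      simpa using this.const_mul 2
    simpa using t1.add t2
  exact squeeze_zero (g := fun p : X × ℂ => 2 * D p.1 x₁ + 2 * dist p.2 z₁)
    (fun p => dist_nonneg) (fun p => hkey p.1 x₁ p.2 z₁) hb

set_option maxHeartbeats 1600000

/-- The fiber-type conditions (a), (b), (c) for an arrangement `H` in `ℂ^n` over an
arrangement `A` in `ℂ^(n-1)` imply that the restricted projection
`ℂ^n − ⋃H → ℂ^(n-1) − ⋃A` is a locally trivial fiber bundle whose fibers are `ℂ`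
minus a fixed finite number of points. -/
theorem fiber_type_arrangement_is_bundle (n : ℕ) (hn : 1 ≤ n)
    (H : Finset (Set (Fin n → ℂ))) (A : Finset (Set (Fin (n - 1) → ℂ)))
    (hH : ∀ h ∈ H, IsAffineHyperplane n h)
    (hA : ∀ a ∈ A, IsAffineHyperplane (n - 1) a)
    (φ : (Fin n → ℂ) →ₗ[ℂ] (Fin (n - 1) → ℂ)) (hφ : Function.Surjective φ)
    -- (a): the pullback of `A` is a sub-arrangement of `H`
    (ha : ∀ a ∈ A, φ ⁻¹' a ∈ H)
    -- (b): each hyperplane of `H` not pulled back from `A` surjects onto `ℂ^(n-1)`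
    (hb : ∀ h ∈ H, (¬ ∃ a ∈ A, h = φ ⁻¹' a) → φ '' h = Set.univ)
    (k : ℕ)
    -- (c): fibers over the complement of `⋃A` meet `⋃H` in exactly `k` points
    (hc : ∀ u : Fin (n - 1) → ℂ, u ∉ ⋃₀ (A : Set (Set (Fin (n - 1) → ℂ))) →
      ({x : Fin n → ℂ | φ x = u ∧ x ∈ ⋃₀ (H : Set (Set (Fin n → ℂ)))}.ncard = k)) :
    ∀ u₀ : Fin (n - 1) → ℂ, u₀ ∉ ⋃₀ (A : Set (Set (Fin (n - 1) → ℂ))) →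
      ∃ U : Set (Fin (n - 1) → ℂ), IsOpen U ∧ u₀ ∈ U ∧
        U ⊆ (⋃₀ (A : Set (Set (Fin (n - 1) → ℂ))))ᶜ ∧
        ∃ P : Finset ℂ, P.card = k ∧
          ∃ e : {x : Fin n → ℂ // φ x ∈ U ∧ x ∉ ⋃₀ (H : Set (Set (Fin n → ℂ)))} ≃ₜ
              U × {z : ℂ // z ∉ (P : Set ℂ)},
            ∀ x, ((e x).1 : Fin (n - 1) → ℂ) = φ x.1 := by
  classical
  intro u₀ hu₀
  -- right inverse of φ
  obtain ⟨s, hs⟩ := φ.exists_rightInverse_of_surjective (LinearMap.range_eq_top.2 hφ)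
  have hsapp : ∀ u, φ (s u) = u := fun u => congrFun (congrArg DFunLike.coe hs) u
  -- a nonzero kernel vector
  have hker_ne : LinearMap.ker φ ≠ ⊥ := by
    intro hbot
    have hinj : Function.Injective φ := LinearMap.ker_eq_bot.1 hbot
    have h1 : Module.finrank ℂ (Fin n → ℂ) ≤ Module.finrank ℂ (Fin (n - 1) → ℂ) :=
      LinearMap.finrank_le_finrank_of_injective hinj
    rw [Module.finrank_fin_fun, Module.finrank_fin_fun] at h1
    omega
  obtain ⟨v, hvker, hv0⟩ := (Submodule.ne_bot_iff _).1 hker_ne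
  have hφv : φ v = 0 := hvker
  have hker : LinearMap.ker φ = Submodule.span ℂ {v} := by
    have hrn := LinearMap.finrank_range_add_finrank_ker φ
    rw [LinearMap.range_eq_top.2 hφ, finrank_top, Module.finrank_fin_fun,
      Module.finrank_fin_fun] at hrn
    have hk1 : Module.finrank ℂ (LinearMap.ker φ) = 1 := by omega
    have hsp : Module.finrank ℂ (Submodule.span ℂ {v}) = 1 := finrank_span_singleton hv0
    refine (Submodule.eq_of_le_of_finrank_le ?_ ?_).symm
    · rwa [Submodule.span_singleton_le_iff_mem]
    · rw [hk1, hsp]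
  -- the coordinates map
  set Emap : ((Fin (n - 1) → ℂ) × ℂ) →ₗ[ℂ] (Fin n → ℂ) :=
    s ∘ₗ LinearMap.fst ℂ _ _ + (LinearMap.snd ℂ _ _).smulRight v with hEmapdef
  have hEapp : ∀ (u : Fin (n - 1) → ℂ) (t' : ℂ), Emap (u, t') = s u + t' • v := by
    intro u t'; simp [hEmapdef]
  have hφE : ∀ p : ((Fin (n - 1) → ℂ) × ℂ), φ (Emap p) = p.1 := by
    intro p
    rw [show p = (p.1, p.2) from rfl, hEapp, map_add, map_smul, hsapp, hφv, smul_zero, add_zero]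
  have hEinj : Function.Injective Emap := by
    rw [← LinearMap.ker_eq_bot, Submodule.eq_bot_iff]
    rintro ⟨u, t'⟩ hp
    rw [LinearMap.mem_ker] at hp
    rw [hEapp] at hp
    have hu : u = 0 := by
      have := congrArg φ hp
      rw [map_add, map_smul, hsapp, hφv, smul_zero, add_zero, map_zero] at this
      exact this
    rw [hu, map_zero, zero_add] at hp
    rcases smul_eq_zero.1 hp with ht' | hv'
    · rw [Prod.mk_eq_zero]; exact ⟨hu, ht'⟩
    · exact absurd hv' hv0
  have hEsurj : Function.Surjective Emap := by
    intro x
    have hx : x - s (φ x) ∈ LinearMap.ker φ := by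
      rw [LinearMap.mem_ker, map_sub, hsapp, sub_self]
    rw [hker, Submodule.mem_span_singleton] at hx
    obtain ⟨a, hax⟩ := hx
    exact ⟨(φ x, a), by rw [hEapp, hax]; ring⟩
  set E : ((Fin (n - 1) → ℂ) × ℂ) ≃ₗ[ℂ] (Fin n → ℂ) :=
    LinearEquiv.ofBijective Emap ⟨hEinj, hEsurj⟩ with hEdef
  set ψ : (Fin n → ℂ) → ℂ := fun x => (E.symm x).2 with hψdef
  have hψE : ∀ (u : Fin (n - 1) → ℂ) (t' : ℂ), ψ (Emap (u, t')) = t' := by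
    intro u t'
    have : E.symm (E (u, t')) = (u, t') := E.symm_apply_apply _
    simp only [hψdef]
    rw [show Emap (u, t') = E (u, t') from rfl, this]
  have hdecomp : ∀ x : Fin n → ℂ, Emap (φ x, ψ x) = x := by
    intro x
    obtain ⟨⟨u, t'⟩, rfl⟩ := hEsurj x
    rw [hφE, hψE]
  -- hyperplane data
  simp only [IsAffineHyperplane] at hH
  choose! L c hL0 hLset using hH
  set H2 : Finset (Set (Fin n → ℂ)) := H.filter (fun h => ¬ ∃ a ∈ A, h = φ ⁻¹' a) with hH2def
  have hH2H : ∀ h ∈ H2, h ∈ H := fun h hh => (Finset.mem_filter.1 hh).1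
  have hLv : ∀ h ∈ H2, L h v ≠ 0 := by
    intro h hh hLv0
    obtain ⟨hhH, hnot⟩ := Finset.mem_filter.1 hh
    have himg : φ '' h = Set.univ := hb h hhH hnot
    have hLne : L h ≠ 0 := hL0 h hhH
    obtain ⟨w, hw⟩ : ∃ w, L h w ≠ 0 := by
      by_contra hcon
      push_neg at hcon
      exact hLne (LinearMap.ext fun w => by rw [hcon w, LinearMap.zero_apply])
    set x₀ : Fin n → ℂ := ((c h + 1) / (L h w)) • w with hx₀
    have hLx₀ : L h x₀ = c h + 1 := by
      rw [hx₀, map_smul, smul_eq_mul, div_mul_cancel₀ _ hw]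
    have : φ x₀ ∈ φ '' h := by rw [himg]; trivial
    obtain ⟨y, hyh, hyx⟩ := this
    have hyker : y - x₀ ∈ LinearMap.ker φ := by
      rw [LinearMap.mem_ker, map_sub, hyx, sub_self]
    rw [hker, Submodule.mem_span_singleton] at hyker
    obtain ⟨a, hay⟩ := hyker
    have hLy : L h y = c h := by
      rw [hLset h hhH] at hyh
      exact hyh
    have : L h (y - x₀) = 0 := by rw [← hay, map_smul, hLv0, smul_zero]
    rw [map_sub, hLy, hLx₀] at this
    have : (1 : ℂ) = 0 := by linear_combination -this
    exact one_ne_zero this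
  set t : Set (Fin n → ℂ) → (Fin (n - 1) → ℂ) → ℂ :=
    fun h u => (c h - L h (s u)) / (L h v) with htdef
  have htc : ∀ h, Continuous (t h) := by
    intro h
    have h1 : Continuous fun u => L h (s u) :=
      ((L h).comp s).continuous_of_finiteDimensional
    exact ((continuous_const.sub h1).div_const _)
  have hmem2 : ∀ h ∈ H2, ∀ (u : Fin (n - 1) → ℂ) (t' : ℂ), (Emap (u, t') ∈ h ↔ t' = t h u) := by
    intro h hh u t'
    have hhH := hH2H h hh
    have hmemh : Emap (u, t') ∈ h ↔ L h (Emap (u, t')) = c h := by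
      conv_lhs => rw [hLset h hhH]
      exact Iff.rfl
    rw [hmemh, hEapp, map_add, map_smul, smul_eq_mul]
    simp only [htdef]
    rw [eq_div_iff (hLv h hh)]
    constructor
    · intro he; linear_combination he
    · intro he; linear_combination he
  have hmemA : ∀ h ∈ H, (∃ a ∈ A, h = φ ⁻¹' a) → ∀ x : Fin n → ℂ,
      φ x ∉ ⋃₀ (A : Set (Set (Fin (n - 1) → ℂ))) → x ∉ h := by
    rintro h hhH ⟨a, haA, rfl⟩ x hx hxh
    exact hx ⟨a, haA, hxh⟩
  set Tfin : (Fin (n - 1) → ℂ) → Finset ℂ := fun u => H2.image (fun h => t h u) with hTdef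
  have hfiber : ∀ u, u ∉ ⋃₀ (A : Set (Set (Fin (n - 1) → ℂ))) →
      {x : Fin n → ℂ | φ x = u ∧ x ∈ ⋃₀ (H : Set (Set (Fin n → ℂ)))}
        = (fun t' => Emap (u, t')) '' (Tfin u : Set ℂ) := by
    intro u hu
    ext x
    constructor
    · rintro ⟨hφx, h, hhH, hxh⟩
      by_cases hcase : ∃ a ∈ A, h = ⇑φ ⁻¹' a
      · exact absurd hxh (hmemA h hhH hcase x (by rwa [hφx]))
      · have hh2 : h ∈ H2 := Finset.mem_filter.2 ⟨hhH, hcase⟩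
        refine ⟨ψ x, ?_, ?_⟩
        · have hx' : x = Emap (u, ψ x) := by rw [← hφx, hdecomp]
          rw [hx'] at hxh
          rw [(hmem2 h hh2 u (ψ x)).1 hxh]
          simp only [hTdef, Finset.coe_image, Set.mem_image, Finset.mem_coe]
          exact ⟨h, hh2, rfl⟩
        · rw [← hφx]; exact hdecomp x
    · rintro ⟨t', ht', rfl⟩
      simp only [hTdef, Finset.coe_image, Set.mem_image, Finset.mem_coe] at ht'
      obtain ⟨h, hh2, rfl⟩ := ht'
      exact ⟨hφE _, h, hH2H h hh2, (hmem2 h hh2 u _).2 rfl⟩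
  have hval : ∀ u, u ∉ ⋃₀ (A : Set (Set (Fin (n - 1) → ℂ))) → (Tfin u).card = k := by
    intro u hu
    have hinj' : Function.Injective fun t' : ℂ => Emap (u, t') := by
      intro a b hab
      have := hEinj hab
      rw [Prod.mk.injEq] at this
      exact this.2
    have := hc u hu
    rw [hfiber u hu, Set.ncard_image_of_injective _ hinj', Set.ncard_coe_finset] at this
    exact this
  set P : Finset ℂ := Tfin u₀ with hPdef
  have hPcard : P.card = k := hval u₀ hu₀
  -- separation radius
  obtain ⟨r, hr, hrsep⟩ : ∃ r : ℝ, 0 < r ∧ ∀ q ∈ P, ∀ q' ∈ P, q ≠ q' → 4 * r ≤ dist q q' := by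
    by_cases hPD : P.offDiag.Nonempty
    · refine ⟨P.offDiag.inf' hPD (fun p => dist p.1 p.2) / 4, ?_, ?_⟩
      · have : 0 < P.offDiag.inf' hPD (fun p => dist p.1 p.2) := by
          rw [Finset.lt_inf'_iff]
          rintro ⟨q, q'⟩ hqq
          rw [Finset.mem_offDiag] at hqq
          exact dist_pos.2 hqq.2.2
        linarith
      · intro q hq q' hq' hne
        have hmem : (q, q') ∈ P.offDiag := Finset.mem_offDiag.2 ⟨hq, hq', hne⟩
        have := Finset.inf'_le (fun p : ℂ × ℂ => dist p.1 p.2) hmem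
        linarith
    · refine ⟨1, one_pos, ?_⟩
      intro q hq q' hq' hne
      exact absurd ⟨(q, q'), Finset.mem_offDiag.2 ⟨hq, hq', hne⟩⟩ hPD
  set δ : ℝ := r / (2 * k + 2) with hδdef
  have hδ : 0 < δ := by positivity
  have h2k : (0:ℝ) < 2 * k + 2 := by positivity
  have hδr : 2 * δ ≤ r := by
    rw [hδdef, ← mul_div_assoc, div_le_iff₀ h2k]
    nlinarith [Nat.cast_nonneg (α := ℝ) k, hr.le]
  have hδk : (k : ℝ) * (δ / r) ≤ 2⁻¹ := by
    have h1 : δ / r = 1 / (2 * k + 2) := by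
      rw [hδdef]
      field_simp
    rw [h1, mul_one_div, div_le_iff₀ h2k]
    nlinarith [Nat.cast_nonneg (α := ℝ) k]
  -- the neighbourhood
  set U : Set (Fin (n - 1) → ℂ) :=
    (⋂ h ∈ H2, {u | dist (t h u) (t h u₀) < δ}) ∩ (⋃₀ (A : Set (Set (Fin (n - 1) → ℂ))))ᶜ
    with hUdef
  have hUopen : IsOpen U := by
    apply IsOpen.inter
    · apply isOpen_biInter_finset
      intro h hh
      exact isOpen_lt ((htc h).dist continuous_const) continuous_const
    · rw [isOpen_compl_iff, Set.sUnion_eq_biUnion]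
      apply Set.Finite.isClosed_biUnion A.finite_toSet
      intro a haA
      obtain ⟨La, ca, hLa0, rfl⟩ := hA a haA
      exact isClosed_eq La.continuous_of_finiteDimensional continuous_const
  have hu₀U : u₀ ∈ U := by
    refine ⟨Set.mem_iInter₂.2 fun h hh => ?_, hu₀⟩
    simpa using hδ
  have hUsub : U ⊆ (⋃₀ (A : Set (Set (Fin (n - 1) → ℂ))))ᶜ := Set.inter_subset_right
  have hUdist : ∀ u ∈ U, ∀ h ∈ H2, dist (t h u) (t h u₀) < δ := by
    intro u hu h hh
    exact Set.mem_iInter₂.1 hu.1 h hh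
  -- representatives
  have hrepx : ∀ q ∈ P, ∃ h, h ∈ H2 ∧ t h u₀ = q := by
    intro q hq
    simpa using Finset.mem_image.1 hq
  choose! rep hrepH hrepval using hrepx
  have hequ : ∀ q ∈ P, ∀ u ∈ U, dist (t (rep q) u) q < δ := by
    intro q hq u hu
    have := hUdist u hu (rep q) (hrepH q hq)
    rwa [hrepval q hq] at this
  -- the coincidence pattern is constant on U
  have hstar : ∀ u ∈ U, ∀ h ∈ H2, t h u = t (rep (t h u₀)) u := by
    intro u hu h hh
    by_contra hne
    set q : ℂ := t h u₀ with hq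
    have hqP : q ∈ P := by
      rw [hPdef, hTdef]
      exact Finset.mem_image_of_mem _ hh
    -- the candidate extra point
    have hinjrep : Set.InjOn (fun q' => t (rep q') u) (P : Set ℂ) := by
      intro q₁ hq₁ q₂ hq₂ heq
      have heq' : t (rep q₁) u = t (rep q₂) u := heq
      by_contra hne'
      have h₁ := hequ q₁ hq₁ u hu
      have h₂ := hequ q₂ hq₂ u hu
      have hsep := hrsep q₁ hq₁ q₂ hq₂ hne'
      have : dist q₁ q₂ ≤ dist (t (rep q₁) u) q₁ + dist (t (rep q₂) u) q₂ := by
        calc dist q₁ q₂ ≤ dist q₁ (t (rep q₁) u) + dist (t (rep q₁) u) q₂ := dist_triangle _ _ _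
          _ = dist (t (rep q₁) u) q₁ + dist (t (rep q₂) u) q₂ := by
              rw [dist_comm q₁, heq']
      linarith
    have himgcard : (P.image (fun q' => t (rep q') u)).card = k := by
      rw [Finset.card_image_of_injOn hinjrep, hPcard]
    have hnotmem : t h u ∉ P.image (fun q' => t (rep q') u) := by
      intro hmem
      obtain ⟨q', hq', heq⟩ := Finset.mem_image.1 hmem
      have heq' : t (rep q') u = t h u := heq
      have h₁ : dist (t h u) q < δ := by
        have := hUdist u hu h hh
        rwa [← hq] at this
      have h₂ := hequ q' hq' u hu
      rw [heq'] at h₂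
      by_cases hqq : q' = q
      · rw [hqq] at heq'
        exact hne heq'.symm
      · have hsep := hrsep q' hq' q hqP hqq
        have : dist q' q ≤ dist (t h u) q' + dist (t h u) q := by
          calc dist q' q ≤ dist q' (t h u) + dist (t h u) q := dist_triangle _ _ _
            _ = dist (t h u) q' + dist (t h u) q := by rw [dist_comm q']
        linarith
    have hsubset : insert (t h u) (P.image (fun q' => t (rep q') u)) ⊆ Tfin u := by
      intro z hz
      rcases Finset.mem_insert.1 hz with rfl | hz
      · rw [hTdef]; exact Finset.mem_image_of_mem _ hh
      · obtain ⟨q', hq', rfl⟩ := Finset.mem_image.1 hz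
        rw [hTdef]
        exact Finset.mem_image_of_mem _ (hrepH q' hq')
    have hcard1 : (insert (t h u) (P.image (fun q' => t (rep q') u))).card = k + 1 := by
      rw [Finset.card_insert_of_notMem hnotmem, himgcard]
    have hcard2 := Finset.card_le_card hsubset
    rw [hcard1, hval u (hUsub hu)] at hcard2
    omega
  -- the perturbation
  set g : ↥U → ℂ → ℂ :=
    fun u t' => ∑ q ∈ P, (↑(bumpC r (t' - q)) * (q - t (rep q) u.1) : ℂ) with hgdef
  set D : ↥U → ↥U → ℝ :=
    fun u u' => ∑ q ∈ P, dist (t (rep q) u.1) (t (rep q) u'.1) with hDdef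
  have hglip : ∀ (x : ↥U) (a b : ℂ), dist (g x a) (g x b) ≤ 2⁻¹ * dist a b := by
    intro x a b
    have hx := x.2
    simp only [hgdef]
    rw [dist_eq_norm, ← Finset.sum_sub_distrib]
    have h1 : ∀ q ∈ P, ‖(↑(bumpC r (a - q)) * (q - t (rep q) x.1) : ℂ)
        - ↑(bumpC r (b - q)) * (q - t (rep q) x.1)‖ ≤ ‖a - b‖ / r * δ := by
      intro q hq
      rw [← sub_mul, norm_mul]
      have hb1 : ‖((bumpC r (a - q) : ℝ) : ℂ) - ((bumpC r (b - q) : ℝ) : ℂ)‖ ≤ ‖a - b‖ / r := by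
        rw [← Complex.ofReal_sub, Complex.norm_real]
        have := bumpC_lip hr (a - q) (b - q)
        rwa [sub_sub_sub_cancel_right] at this
      have hb2 : ‖q - t (rep q) x.1‖ ≤ δ := by
        rw [← dist_eq_norm, dist_comm]
        exact (hequ q hq x.1 hx).le
      exact mul_le_mul hb1 hb2 (norm_nonneg _) (by positivity)
    calc ‖∑ q ∈ P, ((↑(bumpC r (a - q)) * (q - t (rep q) x.1) : ℂ)
            - ↑(bumpC r (b - q)) * (q - t (rep q) x.1))‖
        ≤ ∑ q ∈ P, ‖(↑(bumpC r (a - q)) * (q - t (rep q) x.1) : ℂ)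
            - ↑(bumpC r (b - q)) * (q - t (rep q) x.1)‖ := norm_sum_le _ _
      _ ≤ ∑ _q ∈ P, ‖a - b‖ / r * δ := Finset.sum_le_sum h1
      _ = (k : ℝ) * (‖a - b‖ / r * δ) := by
          rw [Finset.sum_const, nsmul_eq_mul, hPcard]
      _ = ((k : ℝ) * (δ / r)) * ‖a - b‖ := by ring
      _ ≤ 2⁻¹ * ‖a - b‖ := mul_le_mul_of_nonneg_right hδk (norm_nonneg _)
      _ = 2⁻¹ * dist a b := by rw [dist_eq_norm]
  have hgD : ∀ (x x' : ↥U) (a : ℂ), dist (g x a) (g x' a) ≤ D x x' := by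
    intro x x' a
    simp only [hgdef, hDdef]
    rw [dist_eq_norm, ← Finset.sum_sub_distrib]
    refine (norm_sum_le _ _).trans (Finset.sum_le_sum ?_)
    intro q hq
    rw [← mul_sub, norm_mul]
    have h1 : ‖((bumpC r (a - q) : ℝ) : ℂ)‖ ≤ 1 := by
      rw [Complex.norm_real, Real.norm_eq_abs, abs_of_nonneg (bumpC_nonneg _ _)]
      exact bumpC_le_one _ _
    have h2 : ‖(q - t (rep q) x.1) - (q - t (rep q) x'.1)‖
        = dist (t (rep q) x.1) (t (rep q) x'.1) := by
      have he : (q - t (rep q) x.1) - (q - t (rep q) x'.1)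
          = t (rep q) x'.1 - t (rep q) x.1 := by ring
      rw [he, ← dist_eq_norm, dist_comm]
    rw [h2]
    calc ‖((bumpC r (a - q) : ℝ) : ℂ)‖ * dist (t (rep q) x.1) (t (rep q) x'.1)
        ≤ 1 * dist (t (rep q) x.1) (t (rep q) x'.1) :=
          mul_le_mul_of_nonneg_right h1 dist_nonneg
      _ = dist (t (rep q) x.1) (t (rep q) x'.1) := one_mul _
  have hDc : ∀ x₁ : ↥U, Tendsto (fun x => D x x₁) (nhds x₁) (nhds 0) := by
    intro x₁
    have hcont : Continuous fun x : ↥U => D x x₁ := by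
      simp only [hDdef]
      apply continuous_finset_sum
      intro q _
      exact ((htc (rep q)).comp continuous_subtype_val).dist continuous_const
    have h0 : D x₁ x₁ = 0 := Finset.sum_eq_zero fun q _ => dist_self _
    have := hcont.tendsto x₁
    rwa [h0] at this
  obtain ⟨G, hGl, hGr, hGc⟩ := exists_inverse_perturbation g D hglip hgD hDc
  have hgc : Continuous fun p : ↥U × ℂ => g p.1 p.2 := by
    simp only [hgdef]
    apply continuous_finset_sum
    intro q _
    apply Continuous.mul
    · exact Complex.continuous_ofReal.comp
        ((bumpC_continuous r).comp (continuous_snd.sub continuous_const))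
    · exact continuous_const.sub
        ((htc (rep q)).comp (continuous_subtype_val.comp continuous_fst))
  -- mapping properties of F u t' = t' + g u t'
  have hFq : ∀ (u : ↥U), ∀ q ∈ P, t (rep q) u.1 + g u (t (rep q) u.1) = q := by
    intro u q hq
    have hzero : ∀ q' ∈ P, q' ≠ q →
        (↑(bumpC r (t (rep q) u.1 - q')) * (q' - t (rep q') u.1) : ℂ) = 0 := by
      intro q' hq' hne
      have h0 : bumpC r (t (rep q) u.1 - q') = 0 := by
        apply bumpC_eq_zero hr
        have h₂ := hequ q hq u.1 u.2
        have hsep := hrsep q hq q' hq' (Ne.symm hne)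
        have htri : dist q q' ≤ dist (t (rep q) u.1) q + ‖t (rep q) u.1 - q'‖ := by
          rw [← dist_eq_norm]
          calc dist q q' ≤ dist q (t (rep q) u.1) + dist (t (rep q) u.1) q' :=
                dist_triangle _ _ _
            _ = dist (t (rep q) u.1) q + dist (t (rep q) u.1) q' := by rw [dist_comm q]
        linarith
      rw [h0]
      simp
    have hsum : g u (t (rep q) u.1) = ↑(bumpC r (t (rep q) u.1 - q)) * (q - t (rep q) u.1) := by
      simp only [hgdef]
      exact Finset.sum_eq_single_of_mem q hq hzero
    have h1 : bumpC r (t (rep q) u.1 - q) = 1 := by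
      apply bumpC_eq_one hr
      rw [← dist_eq_norm]
      have := hequ q hq u.1 u.2
      linarith
    rw [hsum, h1]
    push_cast
    ring
  have hFinj : ∀ (u : ↥U) (a b : ℂ), a + g u a = b + g u b → a = b := by
    intro u a b hab
    have h1 := hGl u a
    have h2 := hGl u b
    rw [hab] at h1
    exact h1.symm.trans h2
  have hTP : ∀ (u : ↥U), ∀ t' ∈ Tfin u.1, t' + g u t' ∈ P := by
    intro u t' ht'
    obtain ⟨h, hh2, rfl⟩ := Finset.mem_image.1 ht'
    have hqP : t h u₀ ∈ P := by
      rw [hPdef, hTdef]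
      exact Finset.mem_image_of_mem _ hh2
    show t h u.1 + g u (t h u.1) ∈ P
    rw [hstar u.1 u.2 h hh2, hFq u (t h u₀) hqP]
    exact hqP
  have hPF : ∀ (u : ↥U) (t' : ℂ), t' ∉ (Tfin u.1 : Set ℂ) → t' + g u t' ∉ (P : Set ℂ) := by
    intro u t' ht' hmem
    have hqP : t' + g u t' ∈ P := Finset.mem_coe.1 hmem
    have := hFq u (t' + g u t') hqP
    have heq : t (rep (t' + g u t')) u.1 = t' := hFinj u _ _ this
    apply ht'
    rw [← heq]
    exact Finset.mem_coe.2 (Finset.mem_image_of_mem _ (hrepH _ hqP))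
  have hGP : ∀ (u : ↥U) (z : ℂ), z ∉ (P : Set ℂ) → G u z ∉ (Tfin u.1 : Set ℂ) := by
    intro u z hz hmem
    exact hz (by simpa [hGr u z] using hTP u (G u z) hmem)
  -- membership characterization
  have hnotin : ∀ (u : ↥U) (t' : ℂ),
      (Emap ((u : Fin (n - 1) → ℂ), t') ∉ ⋃₀ (H : Set (Set (Fin n → ℂ)))) ↔
        t' ∉ (Tfin u.1 : Set ℂ) := by
    intro u t'
    constructor
    · intro hnot hmem
      obtain ⟨h, hh2, heq⟩ := Finset.mem_image.1 (Finset.mem_coe.1 hmem)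
      exact hnot ⟨h, hH2H h hh2, (hmem2 h hh2 u.1 t').2 heq.symm⟩
    · intro hmem hin
      obtain ⟨h, hhH, hxh⟩ := hin
      have hhH' : h ∈ H := Finset.mem_coe.1 hhH
      by_cases hcase : ∃ a ∈ A, h = ⇑φ ⁻¹' a
      · refine hmemA h hhH' hcase _ ?_ hxh
        rw [hφE]
        exact hUsub u.2
      · have hh2 : h ∈ H2 := Finset.mem_filter.2 ⟨hhH', hcase⟩
        apply hmem
        rw [(hmem2 h hh2 u.1 t').1 hxh]
        exact Finset.mem_coe.2 (Finset.mem_image_of_mem _ hh2)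
  -- assemble
  refine ⟨U, hUopen, hu₀U, hUsub, P, hPcard, ?_⟩
  have hmk : ∀ x : {x : Fin n → ℂ // φ x ∈ U ∧ x ∉ ⋃₀ (H : Set (Set (Fin n → ℂ)))},
      ψ x.1 + g ⟨φ x.1, x.2.1⟩ (ψ x.1) ∉ (P : Set ℂ) := by
    intro x
    apply hPF
    rw [← hnotin ⟨φ x.1, x.2.1⟩ (ψ x.1)]
    simpa [hdecomp x.1] using x.2.2
  have hmk2 : ∀ (p : ↥U × {z : ℂ // z ∉ (P : Set ℂ)}),
      φ (Emap ((p.1 : Fin (n - 1) → ℂ), G p.1 p.2.1)) ∈ U ∧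
        Emap ((p.1 : Fin (n - 1) → ℂ), G p.1 p.2.1) ∉ ⋃₀ (H : Set (Set (Fin n → ℂ))) := by
    intro p
    constructor
    · rw [hφE]; exact p.1.2
    · rw [hnotin p.1 (G p.1 p.2.1)]
      exact hGP p.1 p.2.1 p.2.2
  refine ⟨{ toEquiv :=
            { toFun := fun x => (⟨φ x.1, x.2.1⟩, ⟨ψ x.1 + g ⟨φ x.1, x.2.1⟩ (ψ x.1), hmk x⟩)
              invFun := fun p => ⟨Emap ((p.1 : Fin (n - 1) → ℂ), G p.1 p.2.1), hmk2 p⟩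
              left_inv := ?_
              right_inv := ?_ }
            continuous_toFun := ?_
            continuous_invFun := ?_ }, fun x => rfl⟩
  · -- left inverse
    intro x
    apply Subtype.ext
    show Emap (φ x.1, G ⟨φ x.1, x.2.1⟩ (ψ x.1 + g ⟨φ x.1, x.2.1⟩ (ψ x.1))) = x.1
    rw [hGl ⟨φ x.1, x.2.1⟩ (ψ x.1)]
    exact hdecomp x.1
  · -- right inverse
    rintro ⟨u, z⟩
    refine Prod.ext (Subtype.ext ?_) (Subtype.ext ?_)
    · exact hφE _
    · show ψ (Emap ((u : Fin (n - 1) → ℂ), G u z.1))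
          + g ⟨φ (Emap ((u : Fin (n - 1) → ℂ), G u z.1)), _⟩
            (ψ (Emap ((u : Fin (n - 1) → ℂ), G u z.1))) = z.1
      simp only [hψE, hφE, Subtype.coe_eta]
      exact hGr u z.1
  · -- continuity of toFun
    have hφc : Continuous fun x : {x : Fin n → ℂ // φ x ∈ U ∧
        x ∉ ⋃₀ (H : Set (Set (Fin n → ℂ)))} => φ x.1 :=
      φ.continuous_of_finiteDimensional.comp continuous_subtype_val
    have hψc : Continuous fun x : {x : Fin n → ℂ // φ x ∈ U ∧
        x ∉ ⋃₀ (H : Set (Set (Fin n → ℂ)))} => ψ x.1 := by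
      have hψ2 : Continuous ψ := by
        simp only [hψdef]
        exact continuous_snd.comp E.symm.toLinearMap.continuous_of_finiteDimensional
      exact hψ2.comp continuous_subtype_val
    apply Continuous.prodMk
    · exact Continuous.subtype_mk hφc _
    · apply Continuous.subtype_mk
      have hpair : Continuous fun x : {x : Fin n → ℂ // φ x ∈ U ∧
          x ∉ ⋃₀ (H : Set (Set (Fin n → ℂ)))} => ((⟨φ x.1, x.2.1⟩ : ↥U), ψ x.1) :=
        (Continuous.subtype_mk hφc _).prodMk hψc
      have hsum : Continuous fun p : ↥U × ℂ => p.2 + g p.1 p.2 := continuous_snd.add hgc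
      exact hsum.comp hpair
  · -- continuity of invFun
    apply Continuous.subtype_mk
    have h1 : Continuous fun p : ↥U × {z : ℂ // z ∉ (P : Set ℂ)} =>
        ((p.1 : Fin (n - 1) → ℂ), G p.1 (p.2 : ℂ)) := by
      apply Continuous.prodMk
      · exact continuous_subtype_val.comp continuous_fst
      · exact hGc.comp (continuous_fst.prodMk (continuous_subtype_val.comp continuous_snd))
    exact Emap.continuous_of_finiteDimensional.comp h1
end
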